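/- arXiv:2408.13381 — 3 statements merged into one kernel-verified Lean document; each statement's English description precedes it below -/
import Mathlib

section
/- The endomorphism θ_m of BS(1,n) given by a ↦ a^m, b ↦ b is an automorphism if and only if every prime factor of m divides n. -/
def BSrel (n : ℕ) : Set (FreeGroup (Fin 2)) :=
  {FreeGroup.of 1 * FreeGroup.of 0 * (FreeGroup.of 1)⁻¹ * (FreeGroup.of 0 ^ n)⁻¹}

abbrev BS (n : ℕ) := PresentedGroup (BSrel n)

def BSa (n : ℕ) : BS n := PresentedGroup.of 0
def BSb (n : ℕ) : BS n := PresentedGroup.of 1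

-- basic relation
lemma BS_rel1 (n : ℕ) : BSb n * BSa n * (BSb n)⁻¹ = BSa n ^ n := by
  have h : PresentedGroup.mk (BSrel n)
      (FreeGroup.of 1 * FreeGroup.of 0 * (FreeGroup.of 1)⁻¹ * (FreeGroup.of 0 ^ n)⁻¹) = 1 :=
    (QuotientGroup.eq_one_iff _).mpr
      (Subgroup.subset_normalClosure (Set.mem_singleton _))
  simp only [map_mul, map_inv, map_pow] at h
  have := mul_eq_one_iff_eq_inv.mp h
  simpa [BSa, BSb, PresentedGroup.of] using this

lemma BS_rel_pow (n : ℕ) (j : ℕ) : BSb n * BSa n ^ j * (BSb n)⁻¹ = BSa n ^ (j * n) := by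
  have : BSb n * BSa n ^ j * (BSb n)⁻¹ = (BSb n * BSa n * (BSb n)⁻¹) ^ j := by
    rw [conj_pow]
  rw [this, BS_rel1, ← pow_mul, Nat.mul_comm]

lemma BS_rel_iter (n k j : ℕ) :
    (BSb n) ^ k * BSa n ^ j * ((BSb n) ^ k)⁻¹ = BSa n ^ (j * n ^ k) := by
  induction k generalizing j with
  | zero => simp
  | succ k ih =>
    have : (BSb n) ^ (k+1) * BSa n ^ j * ((BSb n) ^ (k+1))⁻¹
        = (BSb n) ^ k * (BSb n * BSa n ^ j * (BSb n)⁻¹) * ((BSb n) ^ k)⁻¹ := by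
      rw [pow_succ]
      group
    rw [this, BS_rel_pow, ih]
    congr 1
    ring

-- universal property specialized to BS
def BS_hom {G : Type*} [Group G] {n : ℕ} (x y : G) (h : y * x * y⁻¹ = x ^ n) : BS n →* G :=
  PresentedGroup.toGroup (f := fun i => if i = 0 then x else y) (by
    intro r hr
    rw [Set.mem_singleton_iff.mp hr]
    simp only [map_mul, map_inv, map_pow, FreeGroup.lift_apply_of]
    norm_num
    rw [h]
    simp)

@[simp] lemma BS_hom_a {G : Type*} [Group G] {n : ℕ} (x y : G) (h : y * x * y⁻¹ = x ^ n) :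
    BS_hom x y h (BSa n) = x := by
  show BS_hom x y h (PresentedGroup.of 0) = x
  rw [BS_hom, PresentedGroup.toGroup.of]
  simp

@[simp] lemma BS_hom_b {G : Type*} [Group G] {n : ℕ} (x y : G) (h : y * x * y⁻¹ = x ^ n) :
    BS_hom x y h (BSb n) = y := by
  show BS_hom x y h (PresentedGroup.of 1) = y
  rw [BS_hom, PresentedGroup.toGroup.of]
  simp

lemma exists_dvd_pow (n : ℕ) : ∀ m : ℕ, 1 ≤ m → (∀ p : ℕ, p.Prime → p ∣ m → p ∣ n) →
    ∃ k, m ∣ n ^ k := by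
  intro m
  induction m using Nat.strong_induction_on with
  | _ m ih =>
    intro hm h
    rcases eq_or_lt_of_le hm with h1 | h1
    · exact ⟨0, by simp [← h1]⟩
    · obtain ⟨p, pp, pd⟩ := Nat.exists_prime_and_dvd (by omega : m ≠ 1)
      obtain ⟨m', rfl⟩ := pd
      have hp2 := pp.two_le
      have hm' : 1 ≤ m' := by
        rcases Nat.eq_zero_or_pos m' with h0 | h0
        · subst h0; simp at h1
        · exact h0
      obtain ⟨k, hk⟩ := ih m' (by nlinarith) hm'
        (fun q hq hqd => h q hq (Dvd.dvd.mul_left hqd p))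
      exact ⟨k + 1, by rw [pow_succ']; exact mul_dvd_mul (h p pp ⟨m', rfl⟩) hk⟩

lemma conj_pow_inv {G : Type*} [Group G] (u v : G) (j : ℕ) :
    (u⁻¹ * v * u) ^ j = u⁻¹ * v ^ j * u := by
  rw [show u⁻¹ * v * u = u⁻¹ * v * (u⁻¹)⁻¹ by rw [inv_inv], conj_pow, inv_inv]

lemma mpr_dir (n m : ℕ) (hn : 2 ≤ n) (hm : 1 ≤ m)
    (h : ∀ p : ℕ, p.Prime → p ∣ m → p ∣ n) :
    ∃ θ : BS n →* BS n,
      θ (BSa n) = BSa n ^ m ∧ θ (BSb n) = BSb n ∧ Function.Bijective θ := by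
  obtain ⟨k, q, hq⟩ : ∃ k q, n ^ k = m * q := by
    obtain ⟨k, q, hq⟩ := exists_dvd_pow n m hm h
    exact ⟨k, q, hq⟩
  set a := BSa n with ha
  set b := BSb n with hb
  have hθrel : b * a ^ m * b⁻¹ = (a ^ m) ^ n := by
    rw [BS_rel_pow, ← pow_mul]
  set θ : BS n →* BS n := BS_hom (a ^ m) b hθrel with hθ
  have key : ∀ j : ℕ, b * ((b ^ k)⁻¹ * a ^ j * b ^ k) * b⁻¹
      = (b ^ k)⁻¹ * a ^ (j * n) * b ^ k := by
    intro j
    have h2 : b * ((b ^ k)⁻¹ * a ^ j * b ^ k) * b⁻¹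
        = (b ^ k)⁻¹ * (b * a ^ j * b⁻¹) * b ^ k := by group
    rw [h2, BS_rel_pow]
  have hφrel : b * ((b ^ k)⁻¹ * a ^ q * b ^ k) * b⁻¹ = ((b ^ k)⁻¹ * a ^ q * b ^ k) ^ n := by
    rw [key, conj_pow_inv, ← pow_mul]
  set φ : BS n →* BS n := BS_hom ((b ^ k)⁻¹ * a ^ q * b ^ k) b hφrel with hφ
  have hfix : (b ^ k)⁻¹ * a ^ (m * q) * b ^ k = a := by
    have h3 := BS_rel_iter n k 1
    rw [← ha, ← hb, one_mul] at h3
    rw [← hq, ← h3]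
    group
  have hφθa : φ (θ a) = a := by
    rw [hθ, BS_hom_a, map_pow, hφ, BS_hom_a, conj_pow_inv, ← pow_mul, Nat.mul_comm q m, hfix]
  have hθφa : θ (φ a) = a := by
    rw [hφ, BS_hom_a, map_mul, map_mul, map_inv, map_pow, map_pow, hθ, BS_hom_a, BS_hom_b,
      ← pow_mul, hfix]
  have hc1 : θ.comp φ = MonoidHom.id (BS n) := by
    apply PresentedGroup.ext
    intro x
    fin_cases x
    · exact hθφa
    · show θ (φ b) = b
      rw [hφ, BS_hom_b, hθ, BS_hom_b]
  have hc2 : φ.comp θ = MonoidHom.id (BS n) := by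
    apply PresentedGroup.ext
    intro x
    fin_cases x
    · exact hφθa
    · show φ (θ b) = b
      rw [hθ, BS_hom_b, hφ, BS_hom_b]
  refine ⟨θ, by rw [hθ, BS_hom_a], by rw [hθ, BS_hom_b], ?_⟩
  refine Function.bijective_iff_has_inverse.mpr ⟨φ, fun x => ?_, fun x => ?_⟩
  · calc φ (θ x) = (φ.comp θ) x := rfl
    _ = x := by rw [hc2]; rfl
  · calc θ (φ x) = (θ.comp φ) x := rfl
    _ = x := by rw [hc1]; rfl

lemma addRight_pow (p : ℕ) (j : ℕ) (x : ZMod p) :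
    ((Equiv.addRight (1 : ZMod p)) ^ j) x = x + j := by
  induction j with
  | zero => simp
  | succ j ih =>
    rw [pow_succ']
    show (Equiv.addRight (1 : ZMod p)) (((Equiv.addRight (1 : ZMod p)) ^ j) x) = x + (j+1 : ℕ)
    rw [ih]
    push_cast
    simp [Equiv.coe_addRight]
    ring

lemma mp_dir (n m : ℕ) (hn : 2 ≤ n) (p : ℕ) (hp : p.Prime) (hpm : p ∣ m) (hpn : ¬ p ∣ n)
    (θ : BS n →* BS n) (ha : θ (BSa n) = BSa n ^ m) (hb : θ (BSb n) = BSb n)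
    (hsurj : Function.Surjective θ) : False := by
  haveI : Fact p.Prime := ⟨hp⟩
  have hn0 : (n : ZMod p) ≠ 0 := fun h0 => hpn ((ZMod.natCast_eq_zero_iff _ _).mp h0)
  set ψa : Equiv.Perm (ZMod p) := Equiv.addRight (1 : ZMod p) with hψa
  set ψb : Equiv.Perm (ZMod p) := Equiv.mulLeft₀ (n : ZMod p) hn0 with hψb
  have hrel : ψb * ψa * ψb⁻¹ = ψa ^ n := by
    ext x
    rw [hψa, hψb]
    show (n : ZMod p) * (((n : ZMod p))⁻¹ * x + 1) = _
    rw [addRight_pow]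
    field_simp
  set ψ : BS n →* Equiv.Perm (ZMod p) := BS_hom ψa ψb hrel with hψ
  set χ : BS n →* Equiv.Perm (ZMod p) := ψ.comp θ with hχ
  set H : Subgroup (BS n) :=
    { carrier := {g | (χ g) 0 = 0}
      one_mem' := by simp
      mul_mem' := by
        intro g h hg hh
        simp only [Set.mem_setOf_eq, map_mul, Equiv.Perm.mul_apply] at *
        rw [hh, hg]
      inv_mem' := by
        intro g hg
        simp only [Set.mem_setOf_eq, map_inv] at *
        exact Equiv.Perm.inv_eq_iff_eq.mpr hg.symm } with hH
  have hmem : ∀ g : BS n, g ∈ H := by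
    apply PresentedGroup.generated_by
    intro j
    fin_cases j
    · show (χ (BSa n)) 0 = 0
      rw [hχ, MonoidHom.comp_apply, ha, map_pow, hψ, BS_hom_a, addRight_pow]
      simp [(ZMod.natCast_eq_zero_iff m p).mpr hpm]
    · show (χ (BSb n)) 0 = 0
      rw [hχ, MonoidHom.comp_apply, hb, hψ, BS_hom_b, hψb]
      show (n : ZMod p) * 0 = 0
      ring
  obtain ⟨g, hg⟩ := hsurj (BSa n)
  have h1 : (χ g) 0 = 0 := hmem g
  rw [hχ, MonoidHom.comp_apply, hg, hψ, BS_hom_a, hψa] at h1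
  simp at h1

theorem theta_m_automorphism_iff (n m : ℕ) (hn : 2 ≤ n) (hm : 1 ≤ m) :
    (∃ θ : BS n →* BS n,
        θ (BSa n) = BSa n ^ m ∧ θ (BSb n) = BSb n ∧ Function.Bijective θ) ↔
      (∀ p : ℕ, p.Prime → p ∣ m → p ∣ n) := by
  constructor
  · rintro ⟨θ, ha, hb, hbij⟩ p hp hpm
    by_contra hpn
    exact mp_dir n m hn p hp hpm hpn θ ha hb hbij.surjective
  · exact mpr_dir n m hn hm
end

section
/- Let f : ℤ_n → lim Perm(ℤ/n^i) send an n-adic integer η to the compatible family of permutations x ↦ x + η_i on ℤ/n^i, where η_i is the reduction of η. Then f is an injective group homomorphism whose image is the centralizer of f(1). -/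
/-- Compatibility of a family of residues: the inverse limit condition defining `ℤ_n`. -/
def compatZ (n : ℕ) (η : ∀ i, ZMod (n ^ i)) : Prop :=
  ∀ i, ZMod.castHom (pow_dvd_pow n (Nat.le_succ i)) (ZMod (n ^ i)) (η (i + 1)) = η i

/-- Compatibility of a family of permutations: the inverse limit condition defining
`lim Perm(ℤ/n^i)`. -/
def compatP (n : ℕ) (τ : ∀ i, Equiv.Perm (ZMod (n ^ i))) : Prop :=
  ∀ i x, ZMod.castHom (pow_dvd_pow n (Nat.le_succ i)) (ZMod (n ^ i)) (τ (i + 1) x) =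
    τ i (ZMod.castHom (pow_dvd_pow n (Nat.le_succ i)) (ZMod (n ^ i)) x)

/-- The family of translation permutations `x ↦ x + η_i`. -/
def addPerm (n : ℕ) (η : ∀ i, ZMod (n ^ i)) : ∀ i, Equiv.Perm (ZMod (n ^ i)) :=
  fun i => Equiv.addRight (η i)

lemma perm_trans_of_comm {k : ℕ} [NeZero k] (τ : Equiv.Perm (ZMod k))
    (h : ∀ x, τ (x + 1) = τ x + 1) (x : ZMod k) : τ x = x + τ 0 := by
  have key : ∀ m : ℕ, τ (m : ZMod k) = (m : ZMod k) + τ 0 := by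
    intro m
    induction m with
    | zero => simp
    | succ m ih => push_cast; rw [h, ih]; ring
  have hx : ((x.val : ℕ) : ZMod k) = x := ZMod.natCast_rightInverse x
  rw [← hx, key]

theorem padic_to_perm_limit (n : ℕ) (hn : 2 ≤ n) :
    (∀ η, compatZ n η → compatP n (addPerm n η)) ∧
    (∀ η μ, addPerm n (η + μ) = addPerm n η * addPerm n μ) ∧
    (∀ η μ, compatZ n η → compatZ n μ → addPerm n η = addPerm n μ → η = μ) ∧
    (∀ τ, compatP n τ →
      ((∀ i, Commute (τ i) (addPerm n (fun _ => 1) i)) ↔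
        ∃ η, compatZ n η ∧ τ = addPerm n η)) := by
  have hpos : ∀ i : ℕ, NeZero (n ^ i) := fun i =>
    ⟨pow_ne_zero i (by omega)⟩
  refine ⟨?_, ?_, ?_, ?_⟩
  · intro η hη i x
    simp only [addPerm, Equiv.coe_addRight, map_add, hη i]
  · intro η μ
    funext i
    ext x
    simp [addPerm, Equiv.Perm.mul_apply, add_assoc, add_comm, add_left_comm]
  · intro η μ _ _ h
    funext i
    have := congrFun h i
    have h0 := congrArg (fun e : Equiv.Perm (ZMod (n ^ i)) => e 0) this
    simpa [addPerm] using h0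
  · intro τ hτ
    constructor
    · intro hcomm
      refine ⟨fun i => τ i 0, fun i => ?_, funext fun i => ?_⟩
      · haveI := hpos i
        have := hτ i 0
        simpa using this
      · haveI := hpos i
        have hc : ∀ x, τ i (x + 1) = τ i x + 1 := by
          intro x
          have := congrArg (fun e : Equiv.Perm (ZMod (n ^ i)) => e x) (hcomm i)
          simpa [addPerm, Equiv.Perm.mul_apply] using this
        ext x
        simpa [addPerm] using perm_trans_of_comm (τ i) hc x
    · rintro ⟨η, hη, rfl⟩ i
      ext x
      simp [addPerm, Equiv.Perm.mul_apply, add_assoc, add_comm, add_left_comm]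
end

section
/- If a finitely generated group Γ has elements c, d with d c d⁻¹ = c^k for some k ≥ 2, and there is a homomorphism h : Γ → ℤ (a 'height') and a function td : Γ → ℝ satisfying td(g f g⁻¹) = n^{h(g)} · td(f) for all elliptic f (h(f)=0) and td(f^k) = k·td(f), and td(c) ≠ 0, then k = n^l for some l ∈ ℕ with l = h(d). -/
theorem k_is_power_of_n (n k : ℕ) (hn : 2 ≤ n) (hk : 2 ≤ k)
    (G : Type*) [Group G] (h : G → ℤ)
    (hhom : ∀ g₁ g₂ : G, h (g₁ * g₂) = h g₁ + h g₂)
    (td : G → ℝ)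
    (htdpow : ∀ x : G, h x = 0 → ∀ m : ℤ, td (x ^ m) = m * td x)
    (htdconj : ∀ g x : G, h x = 0 → td (g * x * g⁻¹) = (n : ℝ) ^ (h g) * td x)
    (c d : G) (hrel : d * c * d⁻¹ = c ^ k) :
    h c = 0 ∧ (td c ≠ 0 → ∃ l : ℕ, (l : ℤ) = h d ∧ k = n ^ l) := by
  -- build a MonoidHom from h
  have h1 : h 1 = 0 := by
    have := hhom 1 1; simpa using this
  have hinv : ∀ g : G, h g⁻¹ = - h g := by
    intro g
    have := hhom g g⁻¹
    simp [h1] at this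
    linarith
  have hpow : ∀ (g : G) (m : ℕ), h (g ^ m) = m * h g := by
    intro g m
    induction m with
    | zero => simpa using h1
    | succ m ih =>
      rw [pow_succ, hhom, ih]
      push_cast; ring
  have hc0 : h c = 0 := by
    have := congrArg h hrel
    rw [hhom, hhom, hinv, hpow] at this
    have : (k - 1 : ℤ) * h c = 0 := by linarith
    rcases mul_eq_zero.mp this with h' | h'
    · exfalso; have : (2 : ℤ) ≤ k := by exact_mod_cast hk
      omega
    · exact h'
  refine ⟨hc0, fun htd => ?_⟩
  have key : (n : ℝ) ^ (h d) = (k : ℝ) := by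
    have e1 := htdconj d c hc0
    have e2 := htdpow c hc0 (k : ℤ)
    rw [hrel] at e1
    rw [zpow_natCast] at e2
    rw [e2] at e1
    have := mul_right_cancel₀ htd e1.symm
    exact_mod_cast this
  have hn1 : (1 : ℝ) < (n : ℝ) := by exact_mod_cast hn.trans_lt' one_lt_two
  have hd0 : 0 ≤ h d := by
    by_contra hneg
    push_neg at hneg
    have : (n : ℝ) ^ (h d) < 1 := zpow_lt_one_of_neg₀ hn1 hneg
    rw [key] at this
    have : (2 : ℝ) ≤ (k : ℝ) := by exact_mod_cast hk
    linarith
  refine ⟨(h d).toNat, Int.toNat_of_nonneg hd0, ?_⟩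
  have : (n : ℝ) ^ ((h d).toNat) = (k : ℝ) := by
    rw [← key, ← zpow_natCast, Int.toNat_of_nonneg hd0]
  exact_mod_cast this.symm
end
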